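/- arXiv:1512.07163 — 2 statements merged into one kernel-verified Lean document; each statement's English description precedes it below -/
import Mathlib

section
/- For all ρ > 0, the integral ∫_ρ^∞ dr/(r·√(cosh r − cosh ρ)) is at most √2·π/(2ρ·sinh(ρ/2)). -/
/-!
Put `r = ρ + t`. For `ρ, t ≥ 0` one has `cosh r - cosh ρ ≥ (cosh ρ - 1)(eᵗ - 1)`, and
`cosh ρ - 1 = 2 sinh² (ρ / 2)`; together with `r ≥ ρ` this bounds the integrand by
`(√2 ρ sinh (ρ / 2))⁻¹ (e^(r - ρ) - 1)^(-1/2)`. The latter integrates to `π` over `(ρ, ∞)`,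
an antiderivative being `2 arctan √(e^(r - ρ) - 1)`.
-/

open Real MeasureTheory Set Filter Topology

namespace Real

lemma cosh_sub_one_mul_exp_sub_one_le {ρ t : ℝ} (hρ : 0 ≤ ρ) (ht : 0 ≤ t) :
    (cosh ρ - 1) * (exp t - 1) ≤ cosh (ρ + t) - cosh ρ := by
  have hgap :
      cosh (ρ + t) - cosh ρ - (cosh ρ - 1) * (exp t - 1) = exp t - 1 - exp (-ρ) * sinh t := by
    rw [cosh_add, ← cosh_sub_sinh ρ, cosh_eq t, sinh_eq t]
    ring
  have hsinh : 0 ≤ sinh t := sinh_nonneg_iff.2 ht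
  have hsinh_le : sinh t ≤ exp t - 1 := by
    linarith [cosh_add_sinh t, one_le_cosh t]
  have hexp : exp (-ρ) * sinh t ≤ sinh t :=
    mul_le_of_le_one_left hsinh (exp_le_one_iff.2 (neg_nonpos.2 hρ))
  linarith

lemma sqrt_cosh_sub_one {x : ℝ} (hx : 0 ≤ x) : √(cosh x - 1) = √2 * sinh (x / 2) := by
  have h : cosh x - 1 = 2 * sinh (x / 2) ^ 2 := by
    have h2 : cosh x = cosh (x / 2) ^ 2 + sinh (x / 2) ^ 2 := by
      rw [← cosh_two_mul, mul_div_cancel₀ x two_ne_zero]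
    rw [h2, cosh_sq']
    ring
  rw [h, sqrt_mul zero_le_two, sqrt_sq (sinh_nonneg_iff.2 (by linarith))]

lemma hasDerivAt_two_mul_arctan_sqrt_exp_sub_one (a : ℝ) {x : ℝ} (hx : a < x) :
    HasDerivAt (fun r => 2 * arctan √(exp (r - a) - 1)) (1 / √(exp (x - a) - 1)) x := by
  have hpos : 0 < exp (x - a) - 1 := by
    linarith [one_lt_exp_iff.2 (sub_pos.2 hx)]
  have hexp : HasDerivAt (fun r => exp (r - a) - 1) (exp (x - a)) x := by
    simpa using (((hasDerivAt_id x).sub_const a).exp).sub_const 1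
  refine ((hexp.sqrt hpos.ne').arctan.const_mul 2).congr_deriv ?_
  rw [sq_sqrt hpos.le]
  field_simp
  ring

lemma tendsto_two_mul_arctan_sqrt_exp_sub_one (a : ℝ) :
    Tendsto (fun r => 2 * arctan √(exp (r - a) - 1)) atTop (𝓝 π) := by
  have hexp : Tendsto (fun r => exp (r - a) - 1) atTop atTop :=
    tendsto_atTop_add_const_right _ _
      (tendsto_exp_atTop.comp (tendsto_atTop_add_const_right _ _ tendsto_id))
  have := ((tendsto_arctan_atTop.mono_right nhdsWithin_le_nhds).comp
    (tendsto_sqrt_atTop.comp hexp)).const_mul 2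
  simpa [mul_div_cancel₀] using this

lemma integrableOn_one_div_sqrt_exp_sub_one (a : ℝ) :
    IntegrableOn (fun r => 1 / √(exp (r - a) - 1)) (Ioi a) :=
  integrableOn_Ioi_deriv_of_nonneg (by fun_prop)
    (fun _ hx => hasDerivAt_two_mul_arctan_sqrt_exp_sub_one a hx)
    (fun _ _ => by positivity) (tendsto_two_mul_arctan_sqrt_exp_sub_one a)

lemma integral_one_div_sqrt_exp_sub_one (a : ℝ) :
    ∫ r in Ioi a, 1 / √(exp (r - a) - 1) = π := by
  rw [integral_Ioi_of_hasDerivAt_of_nonneg (by fun_prop)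
    (fun _ hx => hasDerivAt_two_mul_arctan_sqrt_exp_sub_one a hx)
    (fun _ _ => by positivity) (tendsto_two_mul_arctan_sqrt_exp_sub_one a)]
  simp

lemma one_div_mul_sqrt_cosh_sub_cosh_le {ρ r : ℝ} (hρ : 0 < ρ) (hr : ρ < r) :
    1 / (r * √(cosh r - cosh ρ)) ≤ 1 / (ρ * √(cosh ρ - 1)) * (1 / √(exp (r - ρ) - 1)) := by
  have hcosh : 0 < cosh ρ - 1 := by linarith [one_lt_cosh.2 hρ.ne']
  have hexp : 0 < exp (r - ρ) - 1 := by linarith [one_lt_exp_iff.2 (sub_pos.2 hr)]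
  have hsqrt : √(cosh ρ - 1) * √(exp (r - ρ) - 1) ≤ √(cosh r - cosh ρ) := by
    rw [← sqrt_mul hcosh.le]
    refine sqrt_le_sqrt ?_
    simpa using cosh_sub_one_mul_exp_sub_one_le hρ.le (sub_pos.2 hr).le
  rw [one_div_mul_one_div, mul_assoc]
  gcongr
  linarith

end Real

theorem stmt_1 (ρ : ℝ) (hρ : 0 < ρ) :
    ∫ r in Ioi ρ, 1 / (r * Real.sqrt (Real.cosh r - Real.cosh ρ)) ≤
      Real.sqrt 2 * π / (2 * ρ * Real.sinh (ρ / 2)) := by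
  calc ∫ r in Ioi ρ, 1 / (r * √(cosh r - cosh ρ))
      ≤ ∫ r in Ioi ρ, 1 / (ρ * √(cosh ρ - 1)) * (1 / √(exp (r - ρ) - 1)) := by
        have hIoi : ∀ᵐ r ∂volume.restrict (Ioi ρ), ρ < r := ae_restrict_mem measurableSet_Ioi
        refine integral_mono_of_nonneg ?_ ((integrableOn_one_div_sqrt_exp_sub_one ρ).const_mul _) ?_
        · filter_upwards [hIoi] with r hr
          have : 0 < r := hρ.trans hr
          positivity
        · filter_upwards [hIoi] with r hr
          exact one_div_mul_sqrt_cosh_sub_cosh_le hρ hr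
    _ = 1 / (ρ * √(cosh ρ - 1)) * π := by
        rw [integral_const_mul, integral_one_div_sqrt_exp_sub_one]
    _ = √2 * π / (2 * ρ * sinh (ρ / 2)) := by
        rw [sqrt_cosh_sub_one hρ.le]
        field_simp
        rw [sq_sqrt zero_le_two]
end

section
/- Define φ(ρ) = (√2/(2π²)) ∫_ρ^∞ dr/(r·√(cosh r − cosh ρ)) for ρ > 0. Then φ(ρ) ≤ 1/(2π·ρ·sinh(ρ/2)) for all ρ > 0. -/
/-!
Write `a = sinh (ρ / 2)`. Since `cosh r - cosh ρ = 2 (sinh² (r / 2) - a²)`, and for `r > ρ` both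
`1 / r ≤ 1 / ρ` and `1 ≤ coth (r / 2)`, the integrand is at most `√2 / (ρ a)` times the derivative
of `r ↦ arccos (a / sinh (r / 2))`, which increases from `0` at `r = ρ` to `π / 2` at infinity.
Hence the integral is at most `√2 / (ρ a) · π / 2`.
-/

open Real MeasureTheory Set Filter Topology

theorem Real.cosh_sub_cosh_eq (x y : ℝ) :
    cosh x - cosh y = 2 * (sinh (x / 2) ^ 2 - sinh (y / 2) ^ 2) := by
  have cosh_eq (t : ℝ) : cosh t = 2 * sinh (t / 2) ^ 2 + 1 := by
    have h := cosh_two_mul (t / 2)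
    rw [mul_div_cancel₀ t two_ne_zero, cosh_sq] at h
    linarith
  rw [cosh_eq x, cosh_eq y]
  ring

theorem Real.tendsto_sinh_atTop : Tendsto sinh atTop atTop :=
  tendsto_atTop_mono' _ ((eventually_ge_atTop 0).mono fun _ hx => self_le_sinh_iff.2 hx)
    tendsto_id

noncomputable section

def arccosSinhRatio (ρ r : ℝ) : ℝ := arccos (sinh (ρ / 2) / sinh (r / 2))

def arccosSinhRatioDeriv (ρ r : ℝ) : ℝ :=
  sinh (ρ / 2) * cosh (r / 2) /
    (2 * sinh (r / 2) * √(sinh (r / 2) ^ 2 - sinh (ρ / 2) ^ 2))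

end

section

variable {ρ r : ℝ}

theorem sinh_half_pos (hr : 0 < r) : 0 < sinh (r / 2) :=
  sinh_pos_iff.2 (half_pos hr)

theorem sinh_half_lt_sinh_half (h : ρ < r) : sinh (ρ / 2) < sinh (r / 2) :=
  sinh_lt_sinh.2 (by linarith)

theorem sqrt_sinh_half_sq_sub_pos (hρ : 0 < ρ) (hr : ρ < r) :
    0 < √(sinh (r / 2) ^ 2 - sinh (ρ / 2) ^ 2) :=
  sqrt_pos.2 <| sub_pos.2 <| pow_lt_pow_left₀ (sinh_half_lt_sinh_half hr) (sinh_half_pos hρ).le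
    two_ne_zero

theorem hasDerivAt_arccosSinhRatio (hρ : 0 < ρ) (hr : ρ < r) :
    HasDerivAt (arccosSinhRatio ρ) (arccosSinhRatioDeriv ρ r) r := by
  unfold arccosSinhRatio arccosSinhRatioDeriv
  have hsinh : HasDerivAt (fun r => sinh (r / 2)) (cosh (r / 2) * (1 / 2)) r :=
    (hasDerivAt_sinh _).comp r ((hasDerivAt_id r).div_const 2)
  have hratio := (hasDerivAt_const r (sinh (ρ / 2))).div hsinh (sinh_half_pos (hρ.trans hr)).ne'
  have haS : sinh (ρ / 2) < sinh (r / 2) := sinh_half_lt_sinh_half hr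
  set a := sinh (ρ / 2)
  set S := sinh (r / 2)
  have ha : 0 < a := sinh_half_pos hρ
  have hS : 0 < S := sinh_half_pos (hρ.trans hr)
  have hlower : -1 < a / S := by linarith [div_pos ha hS]
  have harccos := (hasDerivAt_arccos hlower.ne' ((div_lt_one hS).2 haS).ne).comp r hratio
  refine harccos.congr_deriv ?_
  have hsqrt : √(1 - (a / S) ^ 2) = √(S ^ 2 - a ^ 2) / S := by
    rw [show 1 - (a / S) ^ 2 = (S ^ 2 - a ^ 2) / S ^ 2 by field_simp,
      sqrt_div (sub_nonneg.2 (pow_le_pow_left₀ ha.le haS.le 2)), sqrt_sq hS.le]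
  rw [hsqrt]
  field_simp
  ring

theorem arccosSinhRatioDeriv_nonneg (hρ : 0 < ρ) (hr : ρ < r) : 0 ≤ arccosSinhRatioDeriv ρ r := by
  have := sinh_half_pos hρ
  have := sinh_half_pos (hρ.trans hr)
  unfold arccosSinhRatioDeriv
  positivity

theorem continuousAt_arccosSinhRatio (hr : r ≠ 0) : ContinuousAt (arccosSinhRatio ρ) r := by
  have hS : sinh (r / 2) ≠ 0 := by simpa using hr
  exact continuous_arccos.continuousAt.comp <|
    continuousAt_const.div (continuous_sinh.comp (continuous_id.div_const 2)).continuousAt hS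

theorem arccosSinhRatio_self (hρ : ρ ≠ 0) : arccosSinhRatio ρ ρ = 0 := by
  have hS : sinh (ρ / 2) ≠ 0 := by simpa using hρ
  rw [arccosSinhRatio, div_self hS, arccos_one]

theorem tendsto_arccosSinhRatio_atTop (ρ : ℝ) :
    Tendsto (arccosSinhRatio ρ) atTop (𝓝 (π / 2)) := by
  have hratio : Tendsto (fun r => sinh (ρ / 2) / sinh (r / 2)) atTop (𝓝 0) :=
    tendsto_const_nhds.div_atTop <| tendsto_sinh_atTop.comp (tendsto_id.atTop_div_const two_pos)
  have := (continuous_arccos.tendsto 0).comp hratio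
  rwa [arccos_zero] at this

theorem integral_arccosSinhRatioDeriv (hρ : 0 < ρ) :
    IntegrableOn (arccosSinhRatioDeriv ρ) (Ioi ρ) ∧
      ∫ r in Ioi ρ, arccosSinhRatioDeriv ρ r = π / 2 := by
  have hcont := (continuousAt_arccosSinhRatio (ρ := ρ) hρ.ne').continuousWithinAt (s := Ici ρ)
  have hderiv : ∀ r ∈ Ioi ρ, HasDerivAt (arccosSinhRatio ρ) (arccosSinhRatioDeriv ρ r) r :=
    fun _ hr => hasDerivAt_arccosSinhRatio hρ hr
  have hnonneg : ∀ r ∈ Ioi ρ, 0 ≤ arccosSinhRatioDeriv ρ r :=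
    fun _ hr => arccosSinhRatioDeriv_nonneg hρ hr
  have hlim := tendsto_arccosSinhRatio_atTop ρ
  refine ⟨integrableOn_Ioi_deriv_of_nonneg hcont hderiv hnonneg hlim, ?_⟩
  rw [integral_Ioi_of_hasDerivAt_of_nonneg hcont hderiv hnonneg hlim, arccosSinhRatio_self hρ.ne',
    sub_zero]

theorem one_div_mul_sqrt_cosh_sub_cosh_le (hρ : 0 < ρ) (hr : ρ < r) :
    1 / (r * √(cosh r - cosh ρ)) ≤ √2 / (ρ * sinh (ρ / 2)) * arccosSinhRatioDeriv ρ r := by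
  have hS := sinh_half_pos (hρ.trans hr)
  have hs := sqrt_sinh_half_sq_sub_pos hρ hr
  have hρr : ρ * sinh (r / 2) ≤ r * cosh (r / 2) :=
    mul_le_mul hr.le (sinh_lt_cosh _).le hS.le (hρ.trans hr).le
  have hr0 : 0 < r := hρ.trans hr
  rw [cosh_sub_cosh_eq, sqrt_mul zero_le_two, arccosSinhRatioDeriv]
  calc 1 / (r * (√2 * √(sinh (r / 2) ^ 2 - sinh (ρ / 2) ^ 2)))
      ≤ r * cosh (r / 2) / (ρ * sinh (r / 2)) *
          (1 / (r * (√2 * √(sinh (r / 2) ^ 2 - sinh (ρ / 2) ^ 2)))) :=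
        le_mul_of_one_le_left (by positivity) ((one_le_div (by positivity)).2 hρr)
    _ = _ := by
        field_simp
        exact (sq_sqrt zero_le_two).symm

theorem integral_one_div_mul_sqrt_cosh_sub_cosh_le (hρ : 0 < ρ) :
    ∫ r in Ioi ρ, 1 / (r * √(cosh r - cosh ρ)) ≤ π / (√2 * ρ * sinh (ρ / 2)) := by
  obtain ⟨hint, hval⟩ := integral_arccosSinhRatioDeriv hρ
  calc ∫ r in Ioi ρ, 1 / (r * √(cosh r - cosh ρ))
      ≤ ∫ r in Ioi ρ, √2 / (ρ * sinh (ρ / 2)) * arccosSinhRatioDeriv ρ r := by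
        refine integral_mono_of_nonneg ?_ (hint.const_mul _) ?_ <;>
          refine ae_restrict_of_forall_mem measurableSet_Ioi fun r hr => ?_
        · have : 0 < r := hρ.trans hr
          positivity
        · exact one_div_mul_sqrt_cosh_sub_cosh_le hρ hr
    _ = π / (√2 * ρ * sinh (ρ / 2)) := by
        rw [integral_const_mul, hval]
        field_simp
        exact sq_sqrt zero_le_two

end

theorem stmt_6
    (φ : ℝ → ℝ)
    (hφ : ∀ ρ > 0, φ ρ =
      Real.sqrt 2 / (2 * π ^ 2) *
        ∫ r in Ioi ρ, 1 / (r * Real.sqrt (Real.cosh r - Real.cosh ρ))) :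
    ∀ ρ > 0, φ ρ ≤ 1 / (2 * π * ρ * Real.sinh (ρ / 2)) := by
  intro ρ hρ
  calc φ ρ ≤ √2 / (2 * π ^ 2) * (π / (√2 * ρ * sinh (ρ / 2))) := by
        rw [hφ ρ hρ]
        gcongr
        exact integral_one_div_mul_sqrt_cosh_sub_cosh_le hρ
    _ = 1 / (2 * π * ρ * sinh (ρ / 2)) := by
        field_simp
end
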